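/- Let ℝ^n be decomposed into d blocks with probabilities p_1,…,p_d > 0 summing to 1, p_min := min_i p_i, p_max := max_i p_i. Let X = X_1 × ⋯ × X_d with each X_i ⊆ ℝ^{n_i} nonempty, closed, and convex; let f : ℝ^n → ℝ be continuously differentiable and μ_f-strongly convex on X with ∇f Lipschitz with constant L_f > 0; let F : ℝ^n → ℝ^n be continuous and monotone on X satisfying ‖F(x) − F(y)‖² ≤ L_F² ‖x − y‖² + B_F for all x, y ∈ X with L_F, B_F ≥ 0. Let γ_0 ≥ γ > 0 and η_0 ≥ η_{k−1} ≥ η_k > 0 satisfy γ/η_k ≤ μ_f p_min / (2 p_max (L_F² + η_0² L_f²)). Let x*_{η_k} and x*_{η_{k−1}} be the unique solutions of VI(X, F + η_k ∇f) and VI(X, F + η_{k−1} ∇f), and suppose ‖∇f(x*_{η_{k−1}})‖ ≤ C̄_f. For x ∈ X and each i ∈ {1,…,d}, let x⁺(i) ∈ ℝ^n be defined by x⁺(i)^{(i)} := P_{X_i}(x^{(i)} − γ(F_i(x) + η_k ∇_i f(x))) and x⁺(i)^{(j)} := x^{(j)} for j ≠ i. Then: Σ_{i=1}^d p_i 𝒟(x⁺(i),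 x*_{η_k}) ≤ (p_max/p_min)(1 − p_min μ_f γ η_k / 2) 𝒟(x, x*_{η_{k−1}}) + (C̄_f² (μ_f γ_0 η_0 + 2/p_min) / (μ_f³ p_min γ η_k)) (η_{k−1}/η_k − 1)² + 2γ² B_F. -/

import Mathlib

open scoped RealInnerProductSpace

/-!
The full-block projected step `x̂ = P_X(x - γ (F + ηₖ ∇f)(x))` contracts toward `x*_{ηₖ}`: that point
is a fixed point of the step, the projection is firmly nonexpansive, and `F + ηₖ ∇f` is
`ηₖ μ_f`-strongly monotone with quadratic growth, so
`‖x̂ - x*_{ηₖ}‖² ≤ (1 - γ ηₖ μ_f) ‖x - x*_{ηₖ}‖² + 2 γ² B_F`.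
Updating only block `i`, with probability `p_i`, gives
`Σ p_i 𝒟(x⁺(i), x*) = 𝒟(x, x*) + ‖x̂ - x*‖² - ‖x - x*‖²`, hence the factor `1 - p_min γ ηₖ μ_f` on
`𝒟(x, x*_{ηₖ})`. The two regularized solutions differ by at most `(C̄_f / μ_f)(η_{k-1} / ηₖ - 1)`,
and Young's inequality with weight `a = p_min μ_f γ ηₖ / 2` moves the centre from `x*_{ηₖ}` to
`x*_{η_{k-1}}`.
-/

/-- `ℝ^n` decomposed into `d` blocks: `ℝ^{n 0} × ⋯ × ℝ^{n (d-1)}` with the Euclidean norm. -/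
abbrev BlockSpace (d : ℕ) (n : Fin d → ℕ) :=
  PiLp 2 (fun i : Fin d => EuclideanSpace ℝ (Fin (n i)))

/-- The solution set `SOL(X,G)` of the variational inequality `VI(X,G)`. -/
def VISol {d : ℕ} {n : Fin d → ℕ} (X : Set (BlockSpace d n))
    (G : BlockSpace d n → BlockSpace d n) : Set (BlockSpace d n) :=
  {x | x ∈ X ∧ ∀ y ∈ X, 0 ≤ ⟪G x, y - x⟫}

theorem add_sq_le_young (s t : ℝ) {a : ℝ} (ha : 0 < a) :
    (s + t) ^ 2 ≤ (1 + a) * s ^ 2 + (1 + a⁻¹) * t ^ 2 := by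
  have hdiff : a * ((1 + a) * s ^ 2 + (1 + a⁻¹) * t ^ 2 - (s + t) ^ 2) = (a * s - t) ^ 2 := by
    field_simp; ring
  nlinarith [sq_nonneg (a * s - t)]

theorem norm_sub_sq_le_young {E : Type*} [SeminormedAddCommGroup E] (x y z : E) {a : ℝ}
    (ha : 0 < a) :
    ‖x - z‖ ^ 2 ≤ (1 + a) * ‖x - y‖ ^ 2 + (1 + a⁻¹) * ‖y - z‖ ^ 2 := by
  have htri : ‖x - z‖ ≤ ‖x - y‖ + ‖y - z‖ := norm_sub_le_norm_sub_add_norm_sub x y z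
  calc ‖x - z‖ ^ 2 ≤ (‖x - y‖ + ‖y - z‖) ^ 2 := by gcongr
    _ ≤ _ := add_sq_le_young _ _ ha

section InnerProductSpace

variable {E : Type*} [NormedAddCommGroup E] [InnerProductSpace ℝ E]

theorem real_inner_sub_nonpos_of_forall_norm_sub_le {K : Set E} (hK : Convex ℝ K) {z q : E}
    (hq : q ∈ K) (hmin : ∀ w ∈ K, ‖z - q‖ ≤ ‖z - w‖) {w : E} (hw : w ∈ K) :
    ⟪z - q, w - q⟫ ≤ 0 := by
  have : Nonempty K := ⟨⟨q, hq⟩⟩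
  have hbdd : BddBelow (Set.range fun w : K => ‖z - w‖) :=
    ⟨0, Set.forall_mem_range.2 fun _ => norm_nonneg _⟩
  have hinf : ‖z - q‖ = ⨅ w : K, ‖z - w‖ :=
    le_antisymm (le_ciInf fun w => hmin w w.2) (ciInf_le hbdd ⟨q, hq⟩)
  exact (norm_eq_iInf_iff_real_inner_le_zero hK hq).1 hinf w hw

theorem norm_sub_le_of_real_inner_nonpos {u v a b : E} (ha : ⟪u - a, b - a⟫ ≤ 0)
    (hb : ⟪v - b, a - b⟫ ≤ 0) : ‖a - b‖ ≤ ‖u - v‖ := by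
  have hsq : ‖a - b‖ ^ 2 ≤ ⟪u - v, a - b⟫ := by
    have e : u - v = (u - a) + (a - b) - (v - b) := by abel
    rw [← neg_sub a b, inner_neg_right] at ha
    rw [e, inner_sub_left, inner_add_left, real_inner_self_eq_norm_sq]
    linarith
  have hcs := real_inner_le_norm (u - v) (a - b)
  nlinarith [norm_nonneg (a - b), norm_nonneg (u - v)]

theorem real_inner_sub_ge_of_strongConvexOn {f : E → ℝ} {g : E → E} {s : Set E} {μ : ℝ}
    (hf : ∀ x ∈ s, ∀ y ∈ s, f y + ⟪g y, x - y⟫ + μ / 2 * ‖x - y‖ ^ 2 ≤ f x)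
    {x y : E} (hx : x ∈ s) (hy : y ∈ s) : μ * ‖x - y‖ ^ 2 ≤ ⟪g x - g y, x - y⟫ := by
  have hxy := hf x hx y hy
  have hyx := hf y hy x hx
  rw [← neg_sub x y, inner_neg_right, norm_neg] at hyx
  rw [inner_sub_left]
  linarith

theorem le_of_real_inner_sub_ge_of_lipschitz {g : E → E} {μ L : ℝ} {u v : E} (huv : u ≠ v)
    (hμ : μ * ‖u - v‖ ^ 2 ≤ ⟪g u - g v, u - v⟫) (hL : ‖g u - g v‖ ≤ L * ‖u - v‖) : μ ≤ L := by
  have hpos : 0 < ‖u - v‖ ^ 2 := by positivity [sub_ne_zero.2 huv]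
  have hcs := real_inner_le_norm (g u - g v) (u - v)
  have : ‖g u - g v‖ * ‖u - v‖ ≤ L * ‖u - v‖ ^ 2 := by
    rw [sq, ← mul_assoc]; exact mul_le_mul_of_nonneg_right hL (norm_nonneg _)
  exact le_of_mul_le_mul_right (by linarith) hpos

theorem norm_sub_smul_sq_le {u w : E} {m L B γ : ℝ} (hγ : 0 ≤ γ)
    (hm : m * ‖u‖ ^ 2 ≤ ⟪u, w⟫) (hw : ‖w‖ ^ 2 ≤ 2 * L * ‖u‖ ^ 2 + 2 * B)
    (hγL : 2 * γ * L ≤ m) :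
    ‖u - γ • w‖ ^ 2 ≤ (1 - γ * m) * ‖u‖ ^ 2 + 2 * γ ^ 2 * B := by
  rw [norm_sub_sq_real, real_inner_smul_right, norm_smul, Real.norm_of_nonneg hγ]
  nlinarith [mul_le_mul_of_nonneg_left hm hγ, mul_le_mul_of_nonneg_left hw (sq_nonneg γ),
    mul_le_mul_of_nonneg_right (mul_le_mul_of_nonneg_left hγL hγ) (sq_nonneg ‖u‖)]

theorem norm_sub_le_of_perturbed_VI {F g : E → E} {a b : E} {μ η η' C : ℝ}
    (hF : 0 ≤ ⟪F a - F b, a - b⟫) (hg : μ * ‖a - b‖ ^ 2 ≤ ⟪g a - g b, a - b⟫)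
    (ha : 0 ≤ ⟪F a + η • g a, b - a⟫) (hb : 0 ≤ ⟪F b + η' • g b, a - b⟫)
    (hC : ‖g b‖ ≤ C) (hμ : 0 < μ) (hη : 0 < η) (hηη' : η ≤ η') :
    ‖a - b‖ ≤ C / μ * (η' / η - 1) := by
  rw [← neg_sub a b, inner_neg_right, inner_add_left, real_inner_smul_left] at ha
  rw [inner_add_left, real_inner_smul_left] at hb
  rw [inner_sub_left] at hF hg
  have hcs : ⟪g b, a - b⟫ ≤ C * ‖a - b‖ :=
    (real_inner_le_norm _ _).trans (mul_le_mul_of_nonneg_right hC (norm_nonneg _))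
  -- sum of the two variational inequalities; the `F`-terms are `≤ 0` by monotonicity
  have hquad : η * μ * ‖a - b‖ ^ 2 ≤ (η' - η) * C * ‖a - b‖ := by
    nlinarith [mul_le_mul_of_nonneg_left hg hη.le,
      mul_le_mul_of_nonneg_left hcs (sub_nonneg.2 hηη')]
  rw [show C / μ * (η' / η - 1) = (η' - η) * C / (η * μ) by field_simp,
    le_div_iff₀ (by positivity)]
  rcases (norm_nonneg (a - b)).eq_or_lt with h0 | hpos
  · rw [← h0]; nlinarith [(norm_nonneg (g b)).trans hC]
  · nlinarith

theorem real_inner_add_smul_sub_ge {F g : E → E} {x y : E} {μ η : ℝ}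
    (hF : 0 ≤ ⟪F x - F y, x - y⟫) (hg : μ * ‖x - y‖ ^ 2 ≤ ⟪g x - g y, x - y⟫) (hη : 0 ≤ η) :
    η * μ * ‖x - y‖ ^ 2 ≤ ⟪x - y, (F x + η • g x) - (F y + η • g y)⟫ := by
  rw [show (F x + η • g x) - (F y + η • g y) = (F x - F y) + η • (g x - g y) by module,
    inner_add_right, real_inner_smul_right, real_inner_comm, real_inner_comm (g x - g y)]
  nlinarith [mul_le_mul_of_nonneg_left hg hη]

theorem norm_add_smul_sub_sq_le {F g : E → E} {x y : E} {LF BF Lf η : ℝ}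
    (hF : ‖F x - F y‖ ^ 2 ≤ LF ^ 2 * ‖x - y‖ ^ 2 + BF) (hg : ‖g x - g y‖ ≤ Lf * ‖x - y‖)
    (hη : 0 ≤ η) :
    ‖(F x + η • g x) - (F y + η • g y)‖ ^ 2
      ≤ 2 * (LF ^ 2 + η ^ 2 * Lf ^ 2) * ‖x - y‖ ^ 2 + 2 * BF := by
  rw [show (F x + η • g x) - (F y + η • g y) = (F x - F y) + η • (g x - g y) by module]
  have hsmul : ‖η • (g x - g y)‖ ^ 2 ≤ η ^ 2 * Lf ^ 2 * ‖x - y‖ ^ 2 := by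
    rw [norm_smul, Real.norm_of_nonneg hη, mul_pow, mul_assoc, ← mul_pow Lf]
    exact mul_le_mul_of_nonneg_left (pow_le_pow_left₀ (norm_nonneg _) hg 2) (sq_nonneg η)
  calc ‖(F x - F y) + η • (g x - g y)‖ ^ 2
      ≤ (‖F x - F y‖ + ‖η • (g x - g y)‖) ^ 2 := by gcongr; exact norm_add_le _ _
    _ ≤ 2 * (‖F x - F y‖ ^ 2 + ‖η • (g x - g y)‖ ^ 2) := add_sq_le
    _ ≤ _ := by linarith

end InnerProductSpace

section Stepsize

variable {γ ηk η0 μf pmin pmax LF Lf : ℝ}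

theorem stepsize_mul_le_of_ratio_le
    (hratio : γ / ηk ≤ μf * pmin / (2 * pmax * (LF ^ 2 + η0 ^ 2 * Lf ^ 2)))
    (hγ : 0 ≤ γ) (hηk : 0 < ηk) (hη0 : ηk ≤ η0) (hpmax : 0 < pmax) (hLf : 0 < Lf) :
    2 * γ * pmax * (LF ^ 2 + ηk ^ 2 * Lf ^ 2) ≤ μf * pmin * ηk := by
  have hη0pos : 0 < η0 := hηk.trans_le hη0
  rw [div_le_div_iff₀ hηk (by positivity)] at hratio
  have hsq : ηk ^ 2 * Lf ^ 2 ≤ η0 ^ 2 * Lf ^ 2 := by gcongr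
  nlinarith [mul_le_mul_of_nonneg_left hsq (by positivity : 0 ≤ 2 * γ * pmax)]

theorem stepsize_mul_le (hstep : 2 * γ * pmax * (LF ^ 2 + ηk ^ 2 * Lf ^ 2) ≤ μf * pmin * ηk)
    (hpm : pmin ≤ pmax) (hμf : 0 < μf) (hηk : 0 < ηk) (hpmax : 0 < pmax) :
    2 * γ * (LF ^ 2 + ηk ^ 2 * Lf ^ 2) ≤ ηk * μf := by
  refine le_of_mul_le_mul_right ?_ hpmax
  nlinarith [mul_le_mul_of_nonneg_left hpm (by positivity : 0 ≤ μf * ηk)]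

theorem pmin_mul_stepsize_le_one
    (hstep : 2 * γ * pmax * (LF ^ 2 + ηk ^ 2 * Lf ^ 2) ≤ μf * pmin * ηk)
    (hμL : μf ≤ Lf) (hpmin : 0 < pmin) (hpm : pmin ≤ pmax) (hpmin1 : pmin ≤ 1) (hμf : 0 < μf)
    (hγ : 0 ≤ γ) (hηk : 0 < ηk) :
    pmin * μf * γ * ηk ≤ 1 := by
  have hpmax : 0 < pmax := hpmin.trans_le hpm
  have hLf : 0 < Lf := hμf.trans_le hμL
  have h1 : 2 * (γ * ηk) * pmax * Lf ^ 2 ≤ μf * pmin := by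
    refine le_of_mul_le_mul_right ?_ hηk
    nlinarith [mul_nonneg (mul_nonneg hγ hpmax.le) (sq_nonneg LF)]
  have h2 : μf ^ 2 * pmin ^ 2 ≤ Lf ^ 2 * pmax := by
    have : pmin ^ 2 ≤ pmax := by nlinarith
    have : μf ^ 2 ≤ Lf ^ 2 := by gcongr
    gcongr
  refine le_of_mul_le_mul_right (a := pmax * Lf ^ 2) ?_ (by positivity)
  nlinarith [mul_le_mul_of_nonneg_left h1 (by positivity : 0 ≤ pmin * μf)]

end Stepsize

theorem one_sub_two_mul_le_of_le_young {D0 D1 E a q : ℝ}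
    (hD0 : D0 ≤ (1 + a) * D1 + (1 + a⁻¹) * E) (ha : 0 < a) (ha2 : a ≤ 1 / 2) (hq : 1 ≤ q)
    (hD1 : 0 ≤ D1) (hE : 0 ≤ E) :
    (1 - 2 * a) * D0 ≤ q * (1 - a) * D1 + (1 + a⁻¹) * E := by
  have hE' : 0 ≤ (1 + a⁻¹) * E := by positivity
  have h1 : (1 - 2 * a) * D0 ≤ (1 - 2 * a) * ((1 + a) * D1 + (1 + a⁻¹) * E) :=
    mul_le_mul_of_nonneg_left hD0 (by linarith)
  have h2 : (1 - 2 * a) * (1 + a) ≤ q * (1 - a) := by nlinarith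
  nlinarith [mul_le_mul_of_nonneg_right h2 hD1, mul_nonneg ha.le hE']

theorem young_coeff_mul_le {pmin μf γ ηk γ0 η0 Cf r : ℝ} (hpmin : 0 < pmin) (hμf : 0 < μf)
    (hγ : 0 < γ) (hηk : 0 < ηk) (hγ0 : γ ≤ γ0) (hη0 : ηk ≤ η0) :
    (1 + (pmin * μf * γ * ηk / 2)⁻¹) * (pmin⁻¹ * (Cf / μf * r) ^ 2)
      ≤ Cf ^ 2 * (μf * γ0 * η0 + 2 / pmin) / (μf ^ 3 * pmin * γ * ηk) * r ^ 2 := by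
  calc (1 + (pmin * μf * γ * ηk / 2)⁻¹) * (pmin⁻¹ * (Cf / μf * r) ^ 2)
      = Cf ^ 2 * (μf * γ * ηk + 2 / pmin) / (μf ^ 3 * pmin * γ * ηk) * r ^ 2 := by
        field_simp
    _ ≤ _ := by
      have : 0 ≤ γ0 := hγ.le.trans hγ0
      gcongr

theorem recursive_bound_of_estimates {A D0 D1 E S T pmin pmax μf γ ηk γ0 η0 Cf BF r : ℝ}
    (hA : A = D0 + S - T) (hS : S ≤ (1 - γ * (ηk * μf)) * T + 2 * γ ^ 2 * BF)
    (hT : pmin * D0 ≤ T)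
    (hD0 : D0 ≤ (1 + pmin * μf * γ * ηk / 2) * D1 + (1 + (pmin * μf * γ * ηk / 2)⁻¹) * E)
    (hE : E ≤ pmin⁻¹ * (Cf / μf * r) ^ 2) (hD1 : 0 ≤ D1) (hE0 : 0 ≤ E)
    (hstep : pmin * μf * γ * ηk ≤ 1) (hpmin : 0 < pmin) (hpm : pmin ≤ pmax) (hμf : 0 < μf)
    (hγ : 0 < γ) (hηk : 0 < ηk) (hγ0 : γ ≤ γ0) (hη0 : ηk ≤ η0) :
    A ≤ pmax / pmin * (1 - pmin * μf * γ * ηk / 2) * D1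
      + Cf ^ 2 * (μf * γ0 * η0 + 2 / pmin) / (μf ^ 3 * pmin * γ * ηk) * r ^ 2
      + 2 * γ ^ 2 * BF := by
  set a := pmin * μf * γ * ηk / 2 with ha_def
  have ha : 0 < a := by positivity
  have h2a : 2 * a = pmin * μf * γ * ηk := by rw [ha_def]; ring
  calc A ≤ (1 - 2 * a) * D0 + 2 * γ ^ 2 * BF := by
        rw [h2a]
        nlinarith [mul_le_mul_of_nonneg_left hT (by positivity : 0 ≤ γ * (ηk * μf))]
    _ ≤ pmax / pmin * (1 - a) * D1 + (1 + a⁻¹) * E + 2 * γ ^ 2 * BF := by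
        gcongr ?_ + _
        exact one_sub_two_mul_le_of_le_young hD0 ha (by linarith [h2a])
          ((one_le_div hpmin).2 hpm) hD1 hE0
    _ ≤ _ := by
        gcongr _ + ?_ + _
        exact (mul_le_mul_of_nonneg_left hE (by positivity)).trans
          (young_coeff_mul_le hpmin hμf hγ hηk hγ0 hη0)

section Blocks

variable {ι : Type*} {β : ι → Type*}

theorem forall_mem_of_eq_of_ne {K : ∀ i, Set (β i)} {x y : PiLp 2 β} {i : ι}
    (hx : ∀ j, x j ∈ K j) (hi : y i ∈ K i) (hy : ∀ j, j ≠ i → y j = x j) : ∀ j, y j ∈ K j := by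
  intro j
  by_cases hji : j = i
  · exact hji ▸ hi
  · exact hy j hji ▸ hx j

variable [Fintype ι] [∀ i, NormedAddCommGroup (β i)]

/-- The weighted squared distance `𝒟` of the paper. -/
noncomputable def weightedSqDist (p : ι → ℝ) (x y : PiLp 2 β) : ℝ :=
  ∑ j, (p j)⁻¹ * ‖x j - y j‖ ^ 2

variable {p : ι → ℝ}

theorem weightedSqDist_nonneg (hp : ∀ j, 0 ≤ p j) (x y : PiLp 2 β) :
    0 ≤ weightedSqDist p x y :=
  Finset.sum_nonneg fun j _ => mul_nonneg (inv_nonneg.2 (hp j)) (sq_nonneg _)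

theorem mul_weightedSqDist_le_norm_sq {c : ℝ} (hc : 0 < c) (hcp : ∀ j, c ≤ p j)
    (x y : PiLp 2 β) : c * weightedSqDist p x y ≤ ‖x - y‖ ^ 2 := by
  rw [weightedSqDist, Finset.mul_sum, PiLp.norm_sq_eq_of_L2]
  refine Finset.sum_le_sum fun j _ => ?_
  rw [← mul_assoc, PiLp.sub_apply]
  have : c * (p j)⁻¹ ≤ 1 := by
    rw [mul_inv_le_iff₀ (hc.trans_le (hcp j)), one_mul]; exact hcp j
  exact mul_le_of_le_one_left (sq_nonneg _) this

theorem weightedSqDist_le_inv_mul_norm_sq {c : ℝ} (hc : 0 < c) (hcp : ∀ j, c ≤ p j)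
    (x y : PiLp 2 β) : weightedSqDist p x y ≤ c⁻¹ * ‖x - y‖ ^ 2 := by
  rw [weightedSqDist, PiLp.norm_sq_eq_of_L2, Finset.mul_sum]
  exact Finset.sum_le_sum fun j _ =>
    mul_le_mul_of_nonneg_right (inv_anti₀ hc (hcp j)) (sq_nonneg _)

theorem weightedSqDist_le_young (hp : ∀ j, 0 ≤ p j) {a : ℝ} (ha : 0 < a) (x y z : PiLp 2 β) :
    weightedSqDist p x z ≤ (1 + a) * weightedSqDist p x y + (1 + a⁻¹) * weightedSqDist p y z := by
  rw [weightedSqDist, weightedSqDist, weightedSqDist, Finset.mul_sum, Finset.mul_sum,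
    ← Finset.sum_add_distrib]
  refine Finset.sum_le_sum fun j _ => ?_
  have := mul_le_mul_of_nonneg_left (norm_sub_sq_le_young (x j) (y j) (z j) ha)
    (inv_nonneg.2 (hp j))
  linarith

theorem sum_mul_weightedSqDist_of_update (hp : ∀ j, p j ≠ 0) (hpsum : ∑ i, p i = 1)
    {x y z : PiLp 2 β} {xplus : ι → PiLp 2 β}
    (hxplus : ∀ i, xplus i i = y i ∧ ∀ j, j ≠ i → xplus i j = x j) :
    ∑ i, p i * weightedSqDist p (xplus i) z
      = weightedSqDist p x z + ‖y - z‖ ^ 2 - ‖x - z‖ ^ 2 := by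
  classical
  have hupdate : ∀ i, weightedSqDist p (xplus i) z
      = weightedSqDist p x z + (p i)⁻¹ * (‖y i - z i‖ ^ 2 - ‖x i - z i‖ ^ 2) := by
    intro i
    have hterm : ∀ j, (p j)⁻¹ * ‖xplus i j - z j‖ ^ 2 = (p j)⁻¹ * ‖x j - z j‖ ^ 2
        + if j = i then (p i)⁻¹ * (‖y i - z i‖ ^ 2 - ‖x i - z i‖ ^ 2) else 0 := by
      intro j
      by_cases hji : j = i
      · subst hji; rw [(hxplus j).1, if_pos rfl]; ring
      · rw [(hxplus i).2 j hji, if_neg hji, add_zero]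
    simp only [weightedSqDist, hterm, Finset.sum_add_distrib, Finset.sum_ite_eq',
      Finset.mem_univ, if_true]
  simp only [hupdate, mul_add, ← mul_assoc, mul_inv_cancel₀ (hp _), one_mul,
    Finset.sum_add_distrib, ← Finset.sum_mul, hpsum, Finset.sum_sub_distrib,
    PiLp.norm_sq_eq_of_L2, PiLp.sub_apply]
  ring

variable [∀ i, InnerProductSpace ℝ (β i)]

theorem real_inner_sub_toLp_proj_nonpos {K : ∀ i, Set (β i)} (hK : ∀ i, Convex ℝ (K i))
    {proj : ∀ i, β i → β i} (hproj : ∀ i z, proj i z ∈ K i ∧ ∀ w ∈ K i, ‖z - proj i z‖ ≤ ‖z - w‖)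
    (z : PiLp 2 β) {w : PiLp 2 β} (hw : ∀ i, w i ∈ K i) :
    ⟪z - WithLp.toLp 2 (fun i => proj i (z i)), w - WithLp.toLp 2 (fun i => proj i (z i))⟫ ≤ 0 :=
  Finset.sum_nonpos fun i _ =>
    real_inner_sub_nonpos_of_forall_norm_sub_le (hK i) (hproj i (z i)).1 (hproj i (z i)).2 (hw i)

theorem norm_toLp_proj_step_sub_sq_le {K : ∀ i, Set (β i)} (hK : ∀ i, Convex ℝ (K i))
    {proj : ∀ i, β i → β i} (hproj : ∀ i z, proj i z ∈ K i ∧ ∀ w ∈ K i, ‖z - proj i z‖ ≤ ‖z - w‖)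
    {G : PiLp 2 β → PiLp 2 β} {x s : PiLp 2 β} (hsK : ∀ i, s i ∈ K i)
    (hsVI : ∀ y : PiLp 2 β, (∀ i, y i ∈ K i) → 0 ≤ ⟪G s, y - s⟫)
    {γ m L B : ℝ} (hγ : 0 ≤ γ) (hm : m * ‖x - s‖ ^ 2 ≤ ⟪x - s, G x - G s⟫)
    (hL : ‖G x - G s‖ ^ 2 ≤ 2 * L * ‖x - s‖ ^ 2 + 2 * B) (hγL : 2 * γ * L ≤ m) :
    ‖WithLp.toLp 2 (fun i => proj i ((x - γ • G x) i)) - s‖ ^ 2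
      ≤ (1 - γ * m) * ‖x - s‖ ^ 2 + 2 * γ ^ 2 * B := by
  set q : PiLp 2 β := WithLp.toLp 2 (fun i => proj i ((x - γ • G x) i))
  have hfixed : ⟪(s - γ • G s) - s, q - s⟫ ≤ 0 := by
    rw [sub_sub_cancel_left, inner_neg_left, real_inner_smul_left, neg_nonpos]
    exact mul_nonneg hγ (hsVI q fun i => (hproj i _).1)
  have hle := norm_sub_le_of_real_inner_nonpos
    (real_inner_sub_toLp_proj_nonpos hK hproj (x - γ • G x) hsK) hfixed
  rw [show x - γ • G x - (s - γ • G s) = (x - s) - γ • (G x - G s) by module] at hle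
  exact (pow_le_pow_left₀ (norm_nonneg _) hle 2).trans (norm_sub_smul_sq_le hγ hm hL hγL)

end Blocks

theorem aRBIRG_recursive_error_bound_general {d : ℕ} {n : Fin d → ℕ}
    (p : Fin d → ℝ) (hp : ∀ i, 0 < p i) (hpsum : ∑ i, p i = 1)
    (pmin pmax : ℝ) (hpmin : IsLeast (Set.range p) pmin) (hpmax : IsGreatest (Set.range p) pmax)
    (Xs : ∀ i, Set (EuclideanSpace ℝ (Fin (n i))))
    (hXcv : ∀ i, Convex ℝ (Xs i))
    (X : Set (BlockSpace d n)) (hX : X = {x | ∀ i, x i ∈ Xs i})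
    (f : BlockSpace d n → ℝ)
    (μf : ℝ) (hμf : 0 < μf)
    (hstrong : ∀ x ∈ X, ∀ y ∈ X,
      f y + ⟪gradient f y, x - y⟫ + μf / 2 * ‖x - y‖ ^ 2 ≤ f x)
    (Lf : ℝ)
    (hLip : ∀ x y : BlockSpace d n, ‖gradient f x - gradient f y‖ ≤ Lf * ‖x - y‖)
    (F : BlockSpace d n → BlockSpace d n)
    (hmono : ∀ x ∈ X, ∀ y ∈ X, 0 ≤ ⟪F x - F y, x - y⟫)
    (LF BF : ℝ) (hBF : 0 ≤ BF)
    (hFgrowth : ∀ x ∈ X, ∀ y ∈ X, ‖F x - F y‖ ^ 2 ≤ LF ^ 2 * ‖x - y‖ ^ 2 + BF)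
    (γ0 η0 γ ηk ηk1 : ℝ) (hγpos : 0 < γ) (hγ0 : γ ≤ γ0)
    (hηkpos : 0 < ηk) (hηk1 : ηk ≤ ηk1) (hη0 : ηk1 ≤ η0)
    (hratio : γ / ηk ≤ μf * pmin / (2 * pmax * (LF ^ 2 + η0 ^ 2 * Lf ^ 2)))
    (xek xek1 : BlockSpace d n)
    (hxek : xek ∈ VISol X (fun z => F z + ηk • gradient f z))
    (hxek1 : xek1 ∈ VISol X (fun z => F z + ηk1 • gradient f z))
    (Cf : ℝ) (hCf : ‖gradient f xek1‖ ≤ Cf)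
    (proj : ∀ i, EuclideanSpace ℝ (Fin (n i)) → EuclideanSpace ℝ (Fin (n i)))
    (hproj : ∀ i z, proj i z ∈ Xs i ∧ ∀ w ∈ Xs i, ‖z - proj i z‖ ≤ ‖z - w‖)
    (x : BlockSpace d n) (hxX : x ∈ X)
    (xplus : Fin d → BlockSpace d n)
    (hxplus : ∀ i, (xplus i) i = proj i (x i - γ • (F x i + ηk • gradient f x i))
      ∧ ∀ j, j ≠ i → (xplus i) j = x j) :
    (∑ i, p i * ∑ j, (p j)⁻¹ * ‖(xplus i) j - xek j‖ ^ 2)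
      ≤ pmax / pmin * (1 - pmin * μf * γ * ηk / 2)
          * (∑ j, (p j)⁻¹ * ‖x j - xek1 j‖ ^ 2)
        + Cf ^ 2 * (μf * γ0 * η0 + 2 / pmin) / (μf ^ 3 * pmin * γ * ηk)
          * (ηk1 / ηk - 1) ^ 2
        + 2 * γ ^ 2 * BF := by
  subst hX
  obtain ⟨i0, hi0⟩ := hpmin.1
  have hpmin_pos : 0 < pmin := hi0 ▸ hp i0
  have hpmin_le : ∀ j, pmin ≤ p j := fun j => hpmin.2 ⟨j, rfl⟩
  have hpm : pmin ≤ pmax := hpmin.2 hpmax.1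
  have hpmax_pos : 0 < pmax := hpmin_pos.trans_le hpm
  have hp_nonneg : ∀ j, 0 ≤ p j := fun j => (hp j).le
  have hηk_le : ηk ≤ η0 := hηk1.trans hη0
  have hpmin_one : pmin ≤ 1 := (hpmin_le i0).trans <|
    hpsum ▸ Finset.single_le_sum (fun i _ => hp_nonneg i) (Finset.mem_univ i0)
  -- `μf ≤ Lf` keeps the Young weight `pmin μf γ ηk / 2` below `1/2`; it can fail only when `X`
  -- is a single point, and then every distance in the statement vanishes.
  rcases Set.subsingleton_or_nontrivial {x : BlockSpace d n | ∀ i, x i ∈ Xs i} with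
    hsub | ⟨u, hu, v, hv, huv⟩
  · have hxplus_eq : ∀ i, xplus i = xek := fun i =>
      hsub (forall_mem_of_eq_of_ne hxX ((hxplus i).1 ▸ (hproj i _).1) (hxplus i).2) hxek.1
    obtain rfl : x = xek1 := hsub hxX hxek1.1
    simp only [hxplus_eq, sub_self, norm_zero, zero_pow two_ne_zero, mul_zero,
      Finset.sum_const_zero, zero_add]
    have : 0 < γ0 := hγpos.trans_le hγ0
    have : 0 < η0 := hηkpos.trans_le hηk_le
    positivity
  · have hμL : μf ≤ Lf := le_of_real_inner_sub_ge_of_lipschitz huv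
      (real_inner_sub_ge_of_strongConvexOn hstrong hu hv) (hLip u v)
    have hstep := stepsize_mul_le_of_ratio_le hratio hγpos.le hηkpos hηk_le hpmax_pos
      (hμf.trans_le hμL)
    have hcontr := norm_toLp_proj_step_sub_sq_le hXcv hproj
      (G := fun z => F z + ηk • gradient f z) (x := x) hxek.1 hxek.2 hγpos.le
      (real_inner_add_smul_sub_ge (hmono x hxX xek hxek.1)
        (real_inner_sub_ge_of_strongConvexOn hstrong hxX hxek.1) hηkpos.le)
      (norm_add_smul_sub_sq_le (hFgrowth x hxX xek hxek.1) (hLip x xek) hηkpos.le)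
      (stepsize_mul_le hstep hpm hμf hηkpos hpmax_pos)
    have hexpect := sum_mul_weightedSqDist_of_update (fun j => (hp j).ne') hpsum (z := xek)
      (y := WithLp.toLp 2 fun i => proj i (x i - γ • (F x i + ηk • gradient f x i))) hxplus
    have hΔ := norm_sub_le_of_perturbed_VI (hmono xek hxek.1 xek1 hxek1.1)
      (real_inner_sub_ge_of_strongConvexOn hstrong hxek.1 hxek1.1) (hxek.2 xek1 hxek1.1)
      (hxek1.2 xek hxek.1) hCf hμf hηkpos hηk1
    have hE : weightedSqDist p xek1 xek ≤ pmin⁻¹ * (Cf / μf * (ηk1 / ηk - 1)) ^ 2 :=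
      (weightedSqDist_le_inv_mul_norm_sq hpmin_pos hpmin_le xek1 xek).trans <| by
        rw [norm_sub_rev]; gcongr
    exact recursive_bound_of_estimates hexpect hcontr
      (mul_weightedSqDist_le_norm_sq hpmin_pos hpmin_le x xek)
      (weightedSqDist_le_young hp_nonneg (by positivity) x xek1 xek) hE
      (weightedSqDist_nonneg hp_nonneg _ _) (weightedSqDist_nonneg hp_nonneg _ _)
      (pmin_mul_stepsize_le_one hstep hμL hpmin_pos hpm hpmin_one hμf hγpos.le hηkpos)
      hpmin_pos hpm hμf hγpos hηkpos hγ0 hηk_le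

/-- The recursive error bound (Lemma 4.9 of the paper): under the stated
hypotheses, for a single randomized-block projected step `x⁺(i)` from `x ∈ X` (block `i` drawn
with probability `p_i`), the expected distance `Σᵢ pᵢ 𝒟(x⁺(i), x*_{η_k})` is bounded by
`(p_max/p_min)(1 − p_min μ_f γ η_k/2) 𝒟(x, x*_{η_{k−1}})
  + (C̄_f²(μ_f γ₀ η₀ + 2/p_min)/(μ_f³ p_min γ η_k))(η_{k−1}/η_k − 1)² + 2γ²B_F`. -/
theorem aRBIRG_recursive_error_bound {d : ℕ} {n : Fin d → ℕ}
    (p : Fin d → ℝ) (hp : ∀ i, 0 < p i) (hpsum : ∑ i, p i = 1)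
    (pmin pmax : ℝ) (hpmin : IsLeast (Set.range p) pmin) (hpmax : IsGreatest (Set.range p) pmax)
    (Xs : ∀ i, Set (EuclideanSpace ℝ (Fin (n i))))
    (hXne : ∀ i, (Xs i).Nonempty) (hXcl : ∀ i, IsClosed (Xs i)) (hXcv : ∀ i, Convex ℝ (Xs i))
    (X : Set (BlockSpace d n)) (hX : X = {x | ∀ i, x i ∈ Xs i})
    (f : BlockSpace d n → ℝ) (hf : ContDiff ℝ 1 f)
    (μf : ℝ) (hμf : 0 < μf)
    (hstrong : ∀ x ∈ X, ∀ y ∈ X,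
      f y + ⟪gradient f y, x - y⟫ + μf / 2 * ‖x - y‖ ^ 2 ≤ f x)
    (Lf : ℝ) (hLf : 0 < Lf)
    (hLip : ∀ x y : BlockSpace d n, ‖gradient f x - gradient f y‖ ≤ Lf * ‖x - y‖)
    (F : BlockSpace d n → BlockSpace d n) (hFc : Continuous F)
    (hmono : ∀ x ∈ X, ∀ y ∈ X, 0 ≤ ⟪F x - F y, x - y⟫)
    (LF BF : ℝ) (hLF : 0 ≤ LF) (hBF : 0 ≤ BF)
    (hFgrowth : ∀ x ∈ X, ∀ y ∈ X, ‖F x - F y‖ ^ 2 ≤ LF ^ 2 * ‖x - y‖ ^ 2 + BF)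
    (γ0 η0 γ ηk ηk1 : ℝ) (hγpos : 0 < γ) (hγ0 : γ ≤ γ0)
    (hηkpos : 0 < ηk) (hηk1 : ηk ≤ ηk1) (hη0 : ηk1 ≤ η0)
    (hratio : γ / ηk ≤ μf * pmin / (2 * pmax * (LF ^ 2 + η0 ^ 2 * Lf ^ 2)))
    (xek xek1 : BlockSpace d n)
    (hxek : xek ∈ VISol X (fun z => F z + ηk • gradient f z))
    (hxek1 : xek1 ∈ VISol X (fun z => F z + ηk1 • gradient f z))
    (Cf : ℝ) (hCf : ‖gradient f xek1‖ ≤ Cf)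
    (proj : ∀ i, EuclideanSpace ℝ (Fin (n i)) → EuclideanSpace ℝ (Fin (n i)))
    (hproj : ∀ i z, proj i z ∈ Xs i ∧ ∀ w ∈ Xs i, ‖z - proj i z‖ ≤ ‖z - w‖)
    (x : BlockSpace d n) (hxX : x ∈ X)
    (xplus : Fin d → BlockSpace d n)
    (hxplus : ∀ i, (xplus i) i = proj i (x i - γ • (F x i + ηk • gradient f x i))
      ∧ ∀ j, j ≠ i → (xplus i) j = x j) :
    (∑ i, p i * ∑ j, (p j)⁻¹ * ‖(xplus i) j - xek j‖ ^ 2)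
      ≤ pmax / pmin * (1 - pmin * μf * γ * ηk / 2)
          * (∑ j, (p j)⁻¹ * ‖x j - xek1 j‖ ^ 2)
        + Cf ^ 2 * (μf * γ0 * η0 + 2 / pmin) / (μf ^ 3 * pmin * γ * ηk)
          * (ηk1 / ηk - 1) ^ 2
        + 2 * γ ^ 2 * BF :=
  aRBIRG_recursive_error_bound_general p hp hpsum pmin pmax hpmin hpmax Xs hXcv X hX f μf hμf
    hstrong Lf hLip F hmono LF BF hBF hFgrowth γ0 η0 γ ηk ηk1 hγpos hγ0 hηkpos hηk1 hη0 hratio xek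
    xek1 hxek hxek1 Cf hCf proj hproj x hxX xplus hxplus
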